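/- There exist finite uniformly labeled graphs G_1, G_2 and vertices u ∈ V(G_1), v ∈ V(G_2) such that the unfolding trees F_h^u and F_h^v are not isomorphic for some height h ≥ 4, while for every height h the truncated epath trees TPT_h^u and TPT_h^v are isomorphic. Hence truncated epath trees are not strictly more expressive than unfolding trees on the node level (refuting Lemma 6 of the RFGNN paper). -/

import Mathlib

open scoped Classical

universe u v

/-- A rooted labeled (unordered) tree: a root label together with a list of
child subtrees.  The list order is irrelevant for the isomorphism relation. -/
inductive LTree (L : Type u) : Type u
  | node : L → List (LTree L) → LTree L

namespace LTree

variable {L : Type u} {L' C : Type v}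

/-- The label of the root. -/
def label : LTree L → L
  | node a _ => a

/-- The child subtrees of the root. -/
def children : LTree L → List (LTree L)
  | node _ ts => ts

/-- Isomorphism of rooted labeled trees: there is a bijection between the node
sets preserving the root, the parent–child relation and node labels; for our
representation this means equal root labels and children that correspond, up to
a permutation, to pairwise isomorphic subtrees. -/
inductive Iso : LTree L → LTree L → Prop
  | node (a : L) {ts us vs : List (LTree L)} :
      List.Forall₂ Iso ts vs → vs.Perm us → Iso (node a ts) (node a us)

/-- `Embeds t s` : `t` is an induced rooted subtree of `s`, i.e. the nodes of
`t` inject into the nodes of `s` preserving the root, labels and the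
parent–child relation. -/
inductive Embeds : LTree L → LTree L → Prop
  | node (a : L) {ts us vs : List (LTree L)} :
      List.Forall₂ Embeds ts vs → vs.Subperm us → Embeds (node a ts) (node a us)

/-- Number of nodes of a rooted tree. -/
def size : LTree L → ℕ
  | node _ ts => 1 + (ts.attach.map (fun c => size c.1)).sum
decreasing_by simp_wf; have := List.sizeOf_lt_of_mem c.2; omega

/-- Relabel a tree by `f`. -/
def map (f : L → L') : LTree L → LTree L'
  | node a ts => node (f a) (ts.attach.map (fun c => map f c.1))
decreasing_by simp_wf; have := List.sizeOf_lt_of_mem c.2; omega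

/-- Number of nodes of the tree carrying label `x`. -/
def countLabel [DecidableEq L] (x : L) : LTree L → ℕ
  | node a ts => (if a = x then 1 else 0) + (ts.attach.map (fun c => countLabel x c.1)).sum
decreasing_by simp_wf; have := List.sizeOf_lt_of_mem c.2; omega

/-- Number of nodes at depth `d` carrying label `x`. -/
def countAt [DecidableEq L] (x : L) : ℕ → LTree L → ℕ
  | 0, node a _ => if a = x then 1 else 0
  | d+1, node _ ts => (ts.attach.map (fun c => countAt x d c.1)).sum
termination_by _ t => sizeOf t
decreasing_by simp_wf; have := List.sizeOf_lt_of_mem c.2; omega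

/-- `SubtreeAt t d s` : `s` is the subtree of `t` rooted at one of the nodes of
`t` at depth `d`. -/
inductive SubtreeAt : LTree L → ℕ → LTree L → Prop
  | refl (t : LTree L) : SubtreeAt t 0 t
  | step {t c s : LTree L} {d : ℕ} : c ∈ t.children → SubtreeAt c d s → SubtreeAt t (d+1) s

/-- The AHU canonical value: `ahu f t = f (label t) {{ ahu f c | c child of t }}`,
computed bottom-up (a leaf gets `f (label) ∅`). -/
noncomputable def ahu (f : L → Multiset C → C) : LTree L → C
  | node a ts => f a (↑(ts.attach.map (fun c => ahu f c.1)) : Multiset C)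
decreasing_by simp_wf; have := List.sizeOf_lt_of_mem c.2; omega

end LTree

section Graph

variable {V : Type u} {X : Type v}

/-- The unfolding tree `F_i^v` of height `i` of the vertex `v`, with node labels
given by `μ` (a node representing the graph vertex `x` is labeled `μ x`). -/
noncomputable def SimpleGraph.unfoldingTree (G : SimpleGraph V) [Fintype V] (μ : V → X) :
    ℕ → V → LTree X
  | 0, u => .node (μ u) []
  | i+1, u => .node (μ u) ((G.neighborFinset u).toList.map (G.unfoldingTree μ i))

/-- Auxiliary recursion for `k`-redundant neighborhood trees: `r` is the root
vertex, `d` is the current depth and `x` the currently represented vertex.  A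
neighbor `y` is kept at depth `d + 1` iff `d + 1 ≤ dist r y + k`; since the
minimal depth at which `y` occurs in the unfolding tree rooted at `r` is
`dist r y`, this is exactly the pruning condition
`depth(u) ≤ depth(w) + k` for all nodes `w` with `φ(u) = φ(w)`. -/
noncomputable def SimpleGraph.ntAux (G : SimpleGraph V) [Fintype V] (μ : V → X)
    (r : V) (k : ℕ) : ℕ → ℕ → V → LTree X
  | 0, _, x => .node (μ x) []
  | i+1, d, x => .node (μ x)
      (((G.neighborFinset x).filter (fun y => d + 1 ≤ G.dist r y + k)).toList.map
        (G.ntAux μ r k i (d+1)))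

/-- The `k`-redundant neighborhood tree `T_{i,k}^v` of height `i` of vertex `v`. -/
noncomputable def SimpleGraph.ntTree (G : SimpleGraph V) [Fintype V] (μ : V → X)
    (i k : ℕ) (v : V) : LTree X :=
  G.ntAux μ v k i 0 v

end Graph

/-- `IsEPath G l` : the list of vertices `l` is an epath: a nonempty walk with
no repeated vertices, except that the start vertex may coincide with the end
vertex if the length (number of edges, i.e. `l.length - 1`) is larger than 2. -/
def SimpleGraph.IsEPath {V : Type u} (G : SimpleGraph V) (l : List V) : Prop :=
  l ≠ [] ∧ l.Chain' G.Adj ∧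
    (l.Nodup ∨ (l.head? = l.getLast? ∧ l.dropLast.Nodup ∧ 3 < l.length))

/-- Auxiliary recursion for truncated epath trees: `pre` is the list of vertices
of the current epath strictly before the current (last) vertex `x`; a node is
labeled by `μ` of the last vertex of its epath, and its children are the
one-step extensions that are still epaths. -/
noncomputable def SimpleGraph.tptAux {V : Type u} {X : Type v} (G : SimpleGraph V)
    [Fintype V] (μ : V → X) : ℕ → List V → V → LTree X
  | 0, _, x => .node (μ x) []
  | h+1, pre, x => .node (μ x)
      (((G.neighborFinset x).filter (fun y => G.IsEPath (pre ++ [x, y]))).toList.map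
        (G.tptAux μ h (pre ++ [x])))

/-- The truncated epath tree `TPT_h^v` of height `h` rooted at the vertex `v`. -/
noncomputable def SimpleGraph.tpt {V : Type u} {X : Type v} (G : SimpleGraph V)
    [Fintype V] (μ : V → X) (h : ℕ) (v : V) : LTree X :=
  G.tptAux μ h [] v

/-!
Root the paw (a triangle `0 1 2` with the pendant vertex `3` at `0`) at its pendant vertex, and
the spider with legs `0 - 5`, `0 - 1 - 4`, `0 - 2 - 3` at the end of its short leg. An epath from
`3` runs to `0`, then once around the triangle in either direction, and is then stuck: closing
up would need a return to `3`, which has degree one. So both epath trees are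
`• - • - {• - •, • - •}`, matched by an explicit bisimulation between the two sets of epaths.
Unfolding trees, built from walks, do see the triangle: the walk `3 0 1 2` continues to `0` or
`1`, whereas `5 0 1 4` can only go back to `1`; at height `4` the paw's tree has `23` nodes and
the spider's `21`, and size is an isomorphism invariant.
-/

theorem Set.exists_bijOn_of_existsUnique {α β : Type*} [Nonempty β] {s : Set α} {t : Set β}
    {r : α → β → Prop} (h₁ : ∀ x ∈ s, ∃! y, y ∈ t ∧ r x y) (h₂ : ∀ y ∈ t, ∃! x, x ∈ s ∧ r x y) :
    ∃ e : α → β, Set.BijOn e s t ∧ ∀ x ∈ s, r x (e x) := by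
  choose! e he he_unique using h₁
  refine ⟨e, ⟨fun x hx => (he x hx).1, fun x hx x' hx' hxx' => ?_, fun y hy => ?_⟩,
    fun x hx => (he x hx).2⟩
  · obtain ⟨x₀, -, hx₀⟩ := h₂ (e x) (he x hx).1
    exact (hx₀ x ⟨hx, (he x hx).2⟩).trans (hx₀ x' ⟨hx', hxx' ▸ (he x' hx').2⟩).symm
  · obtain ⟨x, ⟨hx, hxy⟩, -⟩ := h₂ y hy
    exact ⟨x, hx, (he_unique x hx y ⟨hy, hxy⟩).symm⟩

namespace LTree

variable {L : Type u}

theorem size_node (a : L) (ts : List (LTree L)) : size (node a ts) = 1 + (ts.map size).sum := by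
  rw [size, List.attach_map_val]

mutual

theorem Iso.size_eq : ∀ {t s : LTree L}, Iso t s → size t = size s
  | _, _, .node _ hts hperm => by
    rw [size_node, size_node, map_size_eq_of_forall₂_iso hts, (hperm.map size).sum_eq]

theorem map_size_eq_of_forall₂_iso :
    ∀ {ts vs : List (LTree L)}, List.Forall₂ Iso ts vs → ts.map size = vs.map size
  | _, _, .nil => rfl
  | _, _, .cons h hs => by rw [List.map_cons, List.map_cons, Iso.size_eq h, map_size_eq_of_forall₂_iso hs]

end

theorem iso_node_toList_of_bijOn {α β : Type*} (a : L) {s : Finset α} {t : Finset β}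
    {f : α → LTree L} {g : β → LTree L} {e : α → β} (he : Set.BijOn e s t)
    (hiso : ∀ x ∈ s, Iso (f x) (g (e x))) :
    Iso (node a (s.toList.map f)) (node a (t.toList.map g)) := by
  have hperm : (s.toList.map e).Perm t.toList := by
    rw [← Multiset.coe_eq_coe, ← Multiset.map_coe, Finset.coe_toList, Finset.coe_toList,
      ← Finset.image_val_of_injOn he.injOn]
    exact congrArg Finset.val (Finset.coe_injective (by simpa using he.image_eq))
  refine Iso.node a (vs := s.toList.map (g ∘ e)) ?_ (by simpa using hperm.map g)
  rw [List.forall₂_map_left_iff, List.forall₂_map_right_iff, List.forall₂_same]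
  exact fun x hx => hiso x (Finset.mem_toList.mp hx)

theorem iso_node_toList_of_existsUnique {α β : Type*} [Nonempty β] (a : L) {s : Finset α}
    {t : Finset β} {f : α → LTree L} {g : β → LTree L} (r : α → β → Prop)
    (h₁ : ∀ x ∈ s, ∃! y, y ∈ t ∧ r x y) (h₂ : ∀ y ∈ t, ∃! x, x ∈ s ∧ r x y)
    (hiso : ∀ x y, r x y → Iso (f x) (g y)) :
    Iso (node a (s.toList.map f)) (node a (t.toList.map g)) := by
  obtain ⟨e, he, her⟩ := Set.exists_bijOn_of_existsUnique (s := ↑s) (t := ↑t) (r := r)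
    (by simpa using h₁) (by simpa using h₂)
  exact iso_node_toList_of_bijOn a he fun x hx => hiso x (e x) (her x hx)

end LTree

namespace SimpleGraph

variable {V V₁ V₂ : Type u} {X : Type v}

theorem size_unfoldingTree_zero [Fintype V] (G : SimpleGraph V) (μ : V → X) (u : V) :
    (G.unfoldingTree μ 0 u).size = 1 := by
  simp [unfoldingTree, LTree.size_node]

theorem size_unfoldingTree_succ [Fintype V] (G : SimpleGraph V) [DecidableRel G.Adj]
    (μ : V → X) (h : ℕ) (u : V) :
    (G.unfoldingTree μ (h + 1) u).size = 1 + ∑ y with G.Adj u y, (G.unfoldingTree μ h y).size := by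
  rw [unfoldingTree, LTree.size_node, List.map_map, Finset.sum_map_toList]
  congr 1
  exact Finset.sum_congr (by ext; simp) fun _ _ => rfl

instance [DecidableEq V] (G : SimpleGraph V) [DecidableRel G.Adj] : DecidablePred G.IsEPath :=
  fun l => inferInstanceAs (Decidable (l ≠ [] ∧ l.IsChain G.Adj ∧
    (l.Nodup ∨ (l.head? = l.getLast? ∧ l.dropLast.Nodup ∧ 3 < l.length))))

theorem IsEPath.adj_of_append {G : SimpleGraph V} {p : List V} {x y : V}
    (h : G.IsEPath (p ++ [x, y])) : G.Adj x y :=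
  List.isChain_pair.mp h.2.1.right_of_append

theorem mem_neighborFinset_and_isEPath_iff [Fintype V] {G : SimpleGraph V} {p : List V}
    {x y : V} : y ∈ G.neighborFinset x ∧ G.IsEPath (p ++ [x, y]) ↔ G.IsEPath (p ++ [x, y]) := by
  simpa using IsEPath.adj_of_append

def ExtensionsCorrespond (G₁ : SimpleGraph V₁) (G₂ : SimpleGraph V₂)
    (R : List V₁ → V₁ → List V₂ → V₂ → Prop) (p₁ : List V₁) (x₁ : V₁) (p₂ : List V₂) (x₂ : V₂) :
    Prop :=
  (∀ y, G₁.IsEPath (p₁ ++ [x₁, y]) →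
    ∃! w, G₂.IsEPath (p₂ ++ [x₂, w]) ∧ R (p₁ ++ [x₁]) y (p₂ ++ [x₂]) w) ∧
  (∀ w, G₂.IsEPath (p₂ ++ [x₂, w]) →
    ∃! y, G₁.IsEPath (p₁ ++ [x₁, y]) ∧ R (p₁ ++ [x₁]) y (p₂ ++ [x₂]) w)

instance [Fintype V₁] [Fintype V₂] [DecidableEq V₁] [DecidableEq V₂] (G₁ : SimpleGraph V₁)
    (G₂ : SimpleGraph V₂) [DecidableRel G₁.Adj] [DecidableRel G₂.Adj]
    (R : List V₁ → V₁ → List V₂ → V₂ → Prop) [∀ p₁ x₁ p₂ x₂, Decidable (R p₁ x₁ p₂ x₂)]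
    (p₁ : List V₁) (x₁ : V₁) (p₂ : List V₂) (x₂ : V₂) :
    Decidable (ExtensionsCorrespond G₁ G₂ R p₁ x₁ p₂ x₂) := by
  unfold ExtensionsCorrespond ExistsUnique
  infer_instance

theorem tptAux_iso_of_bisimulation [Fintype V₁] [Fintype V₂] {G₁ : SimpleGraph V₁}
    {G₂ : SimpleGraph V₂} {μ₁ : V₁ → X} {μ₂ : V₂ → X} {R : List V₁ → V₁ → List V₂ → V₂ → Prop}
    (hμ : ∀ p₁ x₁ p₂ x₂, R p₁ x₁ p₂ x₂ → μ₁ x₁ = μ₂ x₂)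
    (hR : ∀ p₁ x₁ p₂ x₂, R p₁ x₁ p₂ x₂ → ExtensionsCorrespond G₁ G₂ R p₁ x₁ p₂ x₂) (h : ℕ) :
    ∀ p₁ x₁ p₂ x₂, R p₁ x₁ p₂ x₂ → (G₁.tptAux μ₁ h p₁ x₁).Iso (G₂.tptAux μ₂ h p₂ x₂) := by
  induction h with
  | zero =>
    intro p₁ x₁ p₂ x₂ hrel
    rw [tptAux, tptAux, hμ _ _ _ _ hrel]
    exact .node _ .nil (.refl _)
  | succ h ih =>
    intro p₁ x₁ p₂ x₂ hrel
    obtain ⟨h₁, h₂⟩ := hR _ _ _ _ hrel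
    have : Nonempty V₂ := ⟨x₂⟩
    rw [tptAux, tptAux, hμ _ _ _ _ hrel]
    refine LTree.iso_node_toList_of_existsUnique _ (R (p₁ ++ [x₁]) · (p₂ ++ [x₂]) ·) ?_ ?_
      fun y w hyw => ih _ _ _ _ hyw
    · simpa only [Finset.mem_filter, mem_neighborFinset_and_isEPath_iff] using h₁
    · simpa only [Finset.mem_filter, mem_neighborFinset_and_isEPath_iff] using h₂

end SimpleGraph

abbrev paw : SimpleGraph (Fin 4) :=
  SimpleGraph.fromRel fun a b => a = 0 ∨ (a, b) = (1, 2)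

abbrev spider : SimpleGraph (Fin 6) :=
  SimpleGraph.fromRel fun a b =>
    (a, b) = (0, 1) ∨ (a, b) = (0, 2) ∨ (a, b) = (0, 5) ∨ (a, b) = (1, 4) ∨ (a, b) = (2, 3)

/-- An entry `((p₁, x₁), (p₂, x₂))` pairs the epath `p₁ ++ [x₁]` of `paw` with the epath
`p₂ ++ [x₂]` of `spider`. -/
def epathPairs : List ((List (Fin 4) × Fin 4) × (List (Fin 6) × Fin 6)) :=
  [(([], 3), ([], 5)), (([3], 0), ([5], 0)), (([3, 0], 1), ([5, 0], 1)),
    (([3, 0], 2), ([5, 0], 2)), (([3, 0, 1], 2), ([5, 0, 1], 4)), (([3, 0, 2], 1), ([5, 0, 2], 3))]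

abbrev epathMatch (p₁ : List (Fin 4)) (x₁ : Fin 4) (p₂ : List (Fin 6)) (x₂ : Fin 6) : Prop :=
  ((p₁, x₁), (p₂, x₂)) ∈ epathPairs

theorem extensionsCorrespond_of_epathMatch (p₁ : List (Fin 4)) (x₁ : Fin 4) (p₂ : List (Fin 6))
    (x₂ : Fin 6) (h : epathMatch p₁ x₁ p₂ x₂) :
    SimpleGraph.ExtensionsCorrespond paw spider epathMatch p₁ x₁ p₂ x₂ := by
  have hpairs : ∀ q ∈ epathPairs,
      SimpleGraph.ExtensionsCorrespond paw spider epathMatch q.1.1 q.1.2 q.2.1 q.2.2 := by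
    decide
  exact hpairs _ h

theorem size_unfoldingTree_paw : (paw.unfoldingTree (fun _ => ()) 4 3).size = 23 := by
  simp only [SimpleGraph.size_unfoldingTree_succ, SimpleGraph.size_unfoldingTree_zero]
  decide

theorem size_unfoldingTree_spider : (spider.unfoldingTree (fun _ => ()) 4 5).size = 21 := by
  simp only [SimpleGraph.size_unfoldingTree_succ, SimpleGraph.size_unfoldingTree_zero]
  decide

/-- There exist finite uniformly labeled graphs `G₁, G₂` and
vertices `u ∈ V(G₁)`, `v ∈ V(G₂)` such that the unfolding trees `F_h^u` and
`F_h^v` are not isomorphic for some height `h ≥ 4`, while for every height `h`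
the truncated epath trees `TPT_h^u` and `TPT_h^v` are isomorphic: truncated
epath trees are not strictly more expressive than unfolding trees on the node
level. -/
theorem exists_wl_distinguishes_but_not_tpt :
    ∃ (n₁ n₂ : ℕ) (G₁ : SimpleGraph (Fin n₁)) (G₂ : SimpleGraph (Fin n₂))
      (u : Fin n₁) (v : Fin n₂),
      (∃ h : ℕ, 4 ≤ h ∧ ¬ LTree.Iso (G₁.unfoldingTree (fun _ => ()) h u)
          (G₂.unfoldingTree (fun _ => ()) h v)) ∧
      (∀ h : ℕ, LTree.Iso (G₁.tpt (fun _ => ()) h u)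
          (G₂.tpt (fun _ => ()) h v)) := by
  refine ⟨4, 6, paw, spider, 3, 5, ⟨4, le_rfl, fun hiso => ?_⟩, fun h => ?_⟩
  · simpa [size_unfoldingTree_paw, size_unfoldingTree_spider] using hiso.size_eq
  · exact SimpleGraph.tptAux_iso_of_bisimulation (fun _ _ _ _ _ => rfl)
      extensionsCorrespond_of_epathMatch h [] 3 [] 5 (by decide)
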